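/- For fixed p ≥ 1, a nondecreasing μ : ℕ → ℕ, and R ≥ 0, the set L^p_μ(𝕋,R) of all f ∈ L^p(𝕋) with ‖f‖_p ≤ R and ‖f − τ_δ f‖_p ≤ 2^{-n} for all n and all |δ| ≤ 2^{-μ(n)} is a compact subset of L^p(𝕋). -/

import Mathlib

/-!
Averaging `f` over the `N` arcs `(j/N, (j+1)/N]` of the circle gives a step function `A_N f`.
On each arc, Jensen's inequality bounds `|f t - A_N f t|^p` by the mean of `|f t - f s|^p` over
the arc, which lies in the ball of radius `1/N` around `t`; integrating in `t` and exchanging the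
integrals (the ball has measure at most `2/N`) gives
`‖f - A_N f‖_p ≤ 2 sup_{|δ| ≤ 1/N} ‖f - τ_δ f‖_p`.
For `f` in a norm-bounded set the coefficients of `A_N f` stay in a fixed ball of `ℂ^N`, whose
image under the Lipschitz map to step functions is compact; hence equicontinuity of translations
gives total boundedness. The set is closed because translation is an isometry of `L^p`.
-/

open MeasureTheory ENNReal Set

local notation "𝕋" => AddCircle (1 : ℝ)

instance : IsProbabilityMeasure (volume : Measure 𝕋) := ⟨UnitAddCircle.measure_univ⟩

lemma totallyBounded_of_forall_exists_isCompact {X : Type*} [PseudoMetricSpace X] {S : Set X}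
    (h : ∀ ε > 0, ∃ K, IsCompact K ∧ ∀ x ∈ S, ∃ y ∈ K, dist x y < ε) : TotallyBounded S := by
  refine Metric.totallyBounded_iff.mpr fun ε hε => ?_
  obtain ⟨K, hK, hSK⟩ := h (ε / 2) (half_pos hε)
  obtain ⟨T, hT, hKT⟩ := Metric.totallyBounded_iff.mp hK.totallyBounded (ε / 2) (half_pos hε)
  refine ⟨T, hT, fun x hx => ?_⟩
  obtain ⟨y, hy, hxy⟩ := hSK x hx
  obtain ⟨z, hz, hyz⟩ := mem_iUnion₂.mp (hKT hy)
  exact mem_iUnion₂.mpr ⟨z, hz, Metric.mem_ball.mpr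
    (by linarith [dist_triangle x y z, Metric.mem_ball.mp hyz])⟩

lemma isClosed_setOf_eLpNorm_sub_translate_le {G E : Type*} [MeasurableSpace G] [AddGroup G]
    [MeasurableAdd G] [NormedAddCommGroup E] (μ : Measure G) [μ.IsAddRightInvariant]
    (p : ℝ≥0∞) [Fact (1 ≤ p)] (δ : G) (c : ℝ≥0∞) :
    IsClosed {f : Lp E p μ | eLpNorm (fun t => f t - f (t + δ)) p μ ≤ c} := by
  have hτ := measurePreserving_add_right μ δ
  have hnorm (f : Lp E p μ) :
      eLpNorm (fun t => f t - f (t + δ)) p μ = ‖f - Lp.compMeasurePreserving _ hτ f‖ₑ := by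
    rw [Lp.enorm_def]
    refine eLpNorm_congr_ae ?_
    filter_upwards [Lp.coeFn_sub f (Lp.compMeasurePreserving _ hτ f),
      Lp.coeFn_compMeasurePreserving f hτ] with t hsub hcomp
    rw [hsub, Pi.sub_apply, hcomp]
    rfl
  simp_rw [hnorm]
  exact isClosed_le (continuous_id.sub (Lp.isometry_compMeasurePreserving hτ).continuous).enorm
    continuous_const

section Averages

variable {α E : Type*} [MeasurableSpace α] {μ : Measure α}

lemma rpow_lintegral_le_measure_univ_rpow_mul_lintegral_rpow {v : α → ℝ≥0∞}
    (hv : AEMeasurable v μ) {q : ℝ} (hq : 1 ≤ q) :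
    (∫⁻ a, v a ∂μ) ^ q ≤ μ univ ^ (q - 1) * ∫⁻ a, v a ^ q ∂μ := by
  obtain rfl | hq1 := hq.eq_or_lt
  · simp
  have hq0 : 0 < q := zero_lt_one.trans hq1
  have hHolder := ENNReal.lintegral_mul_le_Lp_mul_Lq μ (Real.HolderConjugate.conjExponent hq1)
    hv aemeasurable_const (g := 1)
  simp only [Pi.mul_apply, Pi.one_apply, mul_one, ENNReal.one_rpow, lintegral_one] at hHolder
  calc (∫⁻ a, v a ∂μ) ^ q
      ≤ ((∫⁻ a, v a ^ q ∂μ) ^ (1 / q) * μ univ ^ (1 / q.conjExponent)) ^ q := by gcongr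
    _ = μ univ ^ (q - 1) * ∫⁻ a, v a ^ q ∂μ := by
      rw [ENNReal.mul_rpow_of_nonneg _ _ hq0.le, ← ENNReal.rpow_mul, ← ENNReal.rpow_mul,
        one_div_mul_cancel hq0.ne', ENNReal.rpow_one, mul_comm, Real.conjExponent]
      congr 2
      field_simp

variable [NormedAddCommGroup E] [NormedSpace ℝ E] {s : Set α}

lemma enorm_setAverage_le (hs₀ : μ s ≠ 0) (g : α → E) :
    ‖⨍ x in s, g x ∂μ‖ₑ ≤ (μ s)⁻¹ * ∫⁻ x in s, ‖g x‖ₑ ∂μ := by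
  rw [setAverage_eq, enorm_smul, measureReal_def, ← ENNReal.toReal_inv,
    Real.enorm_of_nonneg toReal_nonneg, ENNReal.ofReal_toReal (inv_ne_top.mpr hs₀)]
  gcongr
  exact enorm_integral_le_lintegral_enorm g

lemma enorm_setAverage_rpow_le (hs₀ : μ s ≠ 0) (hs : μ s ≠ ∞) {g : α → E}
    (hg : AEStronglyMeasurable g (μ.restrict s)) {q : ℝ} (hq : 1 ≤ q) :
    ‖⨍ x in s, g x ∂μ‖ₑ ^ q ≤ (μ s)⁻¹ * ∫⁻ x in s, ‖g x‖ₑ ^ q ∂μ := by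
  have hq0 : 0 ≤ q := zero_le_one.trans hq
  have hJensen := rpow_lintegral_le_measure_univ_rpow_mul_lintegral_rpow hg.enorm hq
  rw [Measure.restrict_apply_univ] at hJensen
  calc ‖⨍ x in s, g x ∂μ‖ₑ ^ q
      ≤ ((μ s)⁻¹ * ∫⁻ x in s, ‖g x‖ₑ ∂μ) ^ q := by gcongr; exact enorm_setAverage_le hs₀ g
    _ ≤ (μ s)⁻¹ ^ q * (μ s ^ (q - 1) * ∫⁻ x in s, ‖g x‖ₑ ^ q ∂μ) := by
      rw [ENNReal.mul_rpow_of_nonneg _ _ hq0]; gcongr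
    _ = (μ s)⁻¹ * ∫⁻ x in s, ‖g x‖ₑ ^ q ∂μ := by
      rw [← mul_assoc, ← ENNReal.rpow_neg_one, ← ENNReal.rpow_mul, ← ENNReal.rpow_add _ _ hs₀ hs]
      ring_nf

end Averages

lemma Nat.ceil_mul_sub_one_eq_iff {x : ℝ} (hx : 0 < x) {N : ℕ} (hN : 0 < N) (j : ℕ) :
    ⌈x * N⌉₊ - 1 = j ↔ x ∈ Ioc (j / N : ℝ) ((j + 1) / N) := by
  have hN' : (0 : ℝ) < N := by exact_mod_cast hN
  have hpos : 0 < ⌈x * N⌉₊ := Nat.ceil_pos.mpr (by positivity)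
  rw [show ⌈x * N⌉₊ - 1 = j ↔ ⌈x * N⌉₊ = j + 1 by omega, Nat.ceil_eq_iff (by omega),
    mem_Ioc, div_lt_iff₀ hN', le_div_iff₀ hN']
  push_cast
  simp

namespace UnitAddCircle

lemma exists_coe_eq_abs_eq_norm (t : 𝕋) : ∃ x : ℝ, (x : 𝕋) = t ∧ |x| = ‖t‖ := by
  obtain ⟨x, rfl⟩ := QuotientAddGroup.mk_surjective t
  exact ⟨x - round x, by simp, by simp [AddCircle.norm_eq]⟩

lemma exists_coe_eq_mem_Ioc (t : 𝕋) : ∃ x ∈ Ioc (0 : ℝ) 1, (x : 𝕋) = t :=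
  ⟨_, by simpa using (AddCircle.equivIoc 1 0 t).2, AddCircle.coe_equivIoc⟩

variable (N : ℕ) [NeZero N]

/-- The index `j` of the arc `(j/N, (j+1)/N]` containing `t`, read off the representative of `t`
in `(0, 1]` (the reduction modulo `N` never acts). -/
noncomputable def cellIndex (t : 𝕋) : Fin N :=
  Fin.ofNat N (⌈(AddCircle.equivIoc 1 0 t : ℝ) * N⌉₊ - 1)

def cell (j : Fin N) : Set 𝕋 := cellIndex N ⁻¹' {j}

variable {N}

lemma measurable_cellIndex : Measurable (cellIndex N) :=
  measurable_from_nat.comp <| ((measurable_subtype_coe.comp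
    (AddCircle.measurableEquivIoc 1 0).measurable).mul_const _).nat_ceil.sub_const 1

lemma measurableSet_cell (j : Fin N) : MeasurableSet (cell N j) :=
  measurable_cellIndex (measurableSet_singleton j)

lemma cellIndex_coe_eq_iff {x : ℝ} (hx : x ∈ Ioc 0 1) (j : Fin N) :
    cellIndex N x = j ↔ x ∈ Ioc (j / N : ℝ) ((j + 1) / N) := by
  have hN : 0 < N := Nat.pos_of_neZero N
  have hlt : ⌈x * N⌉₊ - 1 < N := by
    have : ⌈x * N⌉₊ ≤ N := Nat.ceil_le.mpr (by nlinarith [hx.2])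
    omega
  rw [cellIndex, AddCircle.equivIoc_coe_eq (by simpa using hx), Fin.ext_iff, Fin.val_ofNat,
    Nat.mod_eq_of_lt hlt, Nat.ceil_mul_sub_one_eq_iff hx.1 hN]

lemma volume_cell (j : Fin N) : volume (cell N j) = (N : ℝ≥0∞)⁻¹ := by
  have hN : (0 : ℝ) < N := by exact_mod_cast Nat.pos_of_neZero N
  have hj : ((j : ℝ) + 1) / N ≤ 1 := by
    rw [div_le_one hN]; exact_mod_cast j.isLt
  have hpre : (↑) ⁻¹' cell N j ∩ Ioc 0 (0 + 1) = Ioc (j / N : ℝ) ((j + 1) / N) := by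
    ext x
    simp only [mem_inter_iff, mem_preimage, zero_add]
    constructor
    · rintro ⟨hxj, hx⟩
      exact (cellIndex_coe_eq_iff hx j).mp hxj
    · intro hxj
      have hx : x ∈ Ioc 0 1 := ⟨lt_of_le_of_lt (by positivity) hxj.1, hxj.2.trans hj⟩
      exact ⟨(cellIndex_coe_eq_iff hx j).mpr hxj, hx⟩
  rw [AddCircle.add_projection_respects_measure 1 0 (measurableSet_cell j), hpre,
    Real.volume_Ioc, add_div, add_sub_cancel_left, ENNReal.ofReal_div_of_pos hN]
  simp

lemma norm_sub_le_of_cellIndex_eq {s t : 𝕋} (h : cellIndex N s = cellIndex N t) :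
    ‖s - t‖ ≤ (N : ℝ)⁻¹ := by
  obtain ⟨x, hx, rfl⟩ := exists_coe_eq_mem_Ioc s
  obtain ⟨y, hy, rfl⟩ := exists_coe_eq_mem_Ioc t
  have hxj := (cellIndex_coe_eq_iff hx _).mp h
  have hyj := (cellIndex_coe_eq_iff (N := N) hy _).mp rfl
  rw [← AddCircle.coe_sub]
  refine QuotientAddGroup.norm_mk_le_norm.trans (abs_sub_le_iff.mpr ⟨?_, ?_⟩) <;>
  · rw [add_div] at hxj hyj
    linarith [hxj.1, hxj.2, hyj.1, hyj.2, inv_eq_one_div (N : ℝ)]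

variable {E : Type*} [NormedAddCommGroup E]

lemma memLp_comp_cellIndex (p : ℝ≥0∞) (c : Fin N → E) :
    MemLp (fun t => c (cellIndex N t)) p volume :=
  .of_bound (StronglyMeasurable.of_discrete.comp_measurable
    measurable_cellIndex).aestronglyMeasurable ‖c‖ (ae_of_all _ fun _ => norm_le_pi_norm c _)

variable (N) in
noncomputable def stepLp (p : ℝ≥0∞) (c : Fin N → E) : Lp E p (volume : Measure 𝕋) :=
  (memLp_comp_cellIndex p c).toLp

lemma lipschitzWith_stepLp (p : ℝ≥0∞) [Fact (1 ≤ p)] :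
    LipschitzWith 1 (stepLp (E := E) N p) :=
  .of_dist_le_mul fun c c' => by
    rw [NNReal.coe_one, one_mul, dist_eq_norm, stepLp, stepLp, ← MemLp.toLp_sub, Lp.norm_toLp]
    refine toReal_le_of_le_ofReal dist_nonneg ?_
    simpa using eLpNorm_le_of_ae_bound (p := p) (μ := volume) (C := dist c c')
      (f := (fun t => c (cellIndex N t)) - fun t => c' (cellIndex N t))
      (ae_of_all _ fun t => by rw [dist_eq_norm]; exact norm_le_pi_norm (c - c') (cellIndex N t))

variable [NormedSpace ℝ E]

variable (N) in
noncomputable def cellMeans (f : 𝕋 → E) (j : Fin N) : E := ⨍ s in cell N j, f s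

variable (N) in
noncomputable def cellAverage (f : 𝕋 → E) (t : 𝕋) : E := cellMeans N f (cellIndex N t)

lemma enorm_sub_cellAverage_rpow_le [CompleteSpace E] {f : 𝕋 → E} (hf : Integrable f)
    {q : ℝ} (hq : 1 ≤ q) (t : 𝕋) :
    ‖f t - cellAverage N f t‖ₑ ^ q ≤
      N * ∫⁻ δ in Metric.closedBall 0 (N : ℝ)⁻¹, ‖f t - f (t + δ)‖ₑ ^ q := by
  set I := cell N (cellIndex N t)
  have hI : volume I = (N : ℝ≥0∞)⁻¹ := volume_cell _
  have hI₀ : volume I ≠ 0 := by simp [hI]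
  have hI_top : volume I ≠ ∞ := by simp [hI, NeZero.ne N]
  have hdiff : f t - cellAverage N f t = ⨍ s in I, (f t - f s) := by
    rw [setAverage_eq, integral_sub (integrable_const _) hf.integrableOn, smul_sub,
      ← setAverage_eq, ← setAverage_eq, setAverage_const hI₀ hI_top]
    rfl
  have hIball : I ⊆ Metric.closedBall t (N : ℝ)⁻¹ := fun s hs =>
    (mem_closedBall_iff_norm).mpr (norm_sub_le_of_cellIndex_eq hs)
  calc ‖f t - cellAverage N f t‖ₑ ^ q
      ≤ (volume I)⁻¹ * ∫⁻ s in I, ‖f t - f s‖ₑ ^ q := by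
        rw [hdiff]
        exact enorm_setAverage_rpow_le hI₀ hI_top
          ((integrable_const _).sub hf.integrableOn).aestronglyMeasurable hq
    _ ≤ N * ∫⁻ s in Metric.closedBall t (N : ℝ)⁻¹, ‖f t - f s‖ₑ ^ q := by
        rw [hI, inv_inv]
        gcongr
    _ = N * ∫⁻ δ in Metric.closedBall 0 (N : ℝ)⁻¹, ‖f t - f (t + δ)‖ₑ ^ q := by
        rw [← (measurePreserving_add_left volume t).setLIntegral_comp_preimage_emb
          (measurableEmbedding_addLeft t), preimage_add_closedBall, sub_self]

lemma volume_closedBall_inv_le :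
    volume (Metric.closedBall (0 : 𝕋) (N : ℝ)⁻¹) ≤ 2 * (N : ℝ≥0∞)⁻¹ := by
  rw [AddCircle.volume_closedBall, ← ENNReal.ofReal_natCast, ← ENNReal.ofReal_inv_of_pos
    (by exact_mod_cast Nat.pos_of_neZero N), ← ENNReal.ofReal_ofNat 2,
    ← ENNReal.ofReal_mul zero_le_two]
  exact ENNReal.ofReal_le_ofReal (min_le_right _ _)

lemma lintegral_enorm_sub_cellAverage_rpow_le [CompleteSpace E] {f : 𝕋 → E}
    (hf : StronglyMeasurable f) (hfi : Integrable f) {q : ℝ} (hq : 1 ≤ q) {η : ℝ≥0∞}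
    (hη : ∀ δ ∈ Metric.closedBall (0 : 𝕋) (N : ℝ)⁻¹, ∫⁻ t, ‖f t - f (t + δ)‖ₑ ^ q ≤ η) :
    ∫⁻ t, ‖f t - cellAverage N f t‖ₑ ^ q ≤ 2 * η := by
  set B := Metric.closedBall (0 : 𝕋) (N : ℝ)⁻¹
  have hmeas : Measurable (Function.uncurry fun t δ : 𝕋 => ‖f t - f (t + δ)‖ₑ ^ q) :=
    ((hf.comp_measurable measurable_fst).sub
      (hf.comp_measurable (measurable_fst.add measurable_snd))).enorm.pow_const q
  calc ∫⁻ t, ‖f t - cellAverage N f t‖ₑ ^ q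
      ≤ ∫⁻ t, N * ∫⁻ δ in B, ‖f t - f (t + δ)‖ₑ ^ q :=
        lintegral_mono (enorm_sub_cellAverage_rpow_le hfi hq)
    _ = N * ∫⁻ δ in B, ∫⁻ t, ‖f t - f (t + δ)‖ₑ ^ q := by
        rw [lintegral_const_mul' _ _ (natCast_ne_top N),
          lintegral_lintegral_swap hmeas.aemeasurable]
    _ ≤ N * ∫⁻ _ in B, η := by gcongr N * ?_; exact setLIntegral_mono measurable_const hη
    _ ≤ N * (η * (2 * (N : ℝ≥0∞)⁻¹)) := by
        rw [setLIntegral_const]; gcongr; exact volume_closedBall_inv_le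
    _ = 2 * η := by
        rw [mul_left_comm, mul_left_comm _ 2, ENNReal.mul_inv_cancel (by simp [NeZero.ne N])
          (natCast_ne_top N), mul_one, mul_comm]

lemma eLpNorm_sub_cellAverage_le [CompleteSpace E] {p : ℝ≥0∞} (hp₁ : 1 ≤ p) (hp : p ≠ ∞)
    {f : 𝕋 → E} (hf : StronglyMeasurable f) (hfi : Integrable f) {η : ℝ≥0∞}
    (hη : ∀ δ ∈ Metric.closedBall (0 : 𝕋) (N : ℝ)⁻¹,
      eLpNorm (fun t => f t - f (t + δ)) p volume ≤ η) :
    eLpNorm (fun t => f t - cellAverage N f t) p volume ≤ 2 * η := by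
  have hq : 1 ≤ p.toReal := by
    simpa using (ENNReal.toReal_le_toReal one_ne_top hp).mpr hp₁
  have hq₀ : 0 < p.toReal := zero_lt_one.trans_le hq
  have hp₀ : p ≠ 0 := (zero_lt_one.trans_le hp₁).ne'
  simp only [eLpNorm_eq_lintegral_rpow_enorm_toReal hp₀ hp] at hη ⊢
  have hlint := lintegral_enorm_sub_cellAverage_rpow_le hf hfi hq (η := η ^ p.toReal)
    fun δ hδ => by
      simpa [← ENNReal.rpow_mul, hq₀.ne'] using ENNReal.rpow_le_rpow (hη δ hδ) hq₀.le
  calc (∫⁻ t, ‖f t - cellAverage N f t‖ₑ ^ p.toReal) ^ (1 / p.toReal)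
      ≤ (2 * η ^ p.toReal) ^ (1 / p.toReal) := by gcongr
    _ = 2 ^ (1 / p.toReal) * η := by
        rw [ENNReal.mul_rpow_of_nonneg _ _ (by positivity), ← ENNReal.rpow_mul,
          mul_one_div_cancel hq₀.ne', ENNReal.rpow_one]
    _ ≤ 2 * η := by
        gcongr
        conv_rhs => rw [← ENNReal.rpow_one 2]
        exact ENNReal.rpow_le_rpow_of_exponent_le one_le_two
          ((div_le_one hq₀).mpr hq)

lemma enorm_cellMeans_le {p : ℝ≥0∞} (hp₁ : 1 ≤ p) {f : 𝕋 → E}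
    (hf : AEStronglyMeasurable f volume) (j : Fin N) :
    ‖cellMeans N f j‖ₑ ≤ N * eLpNorm f p volume := by
  calc ‖cellMeans N f j‖ₑ
      ≤ (volume (cell N j))⁻¹ * ∫⁻ s in cell N j, ‖f s‖ₑ :=
        enorm_setAverage_le (by simp [volume_cell]) f
    _ ≤ N * ∫⁻ s, ‖f s‖ₑ := by rw [volume_cell, inv_inv]; gcongr; exact Measure.restrict_le_self
    _ ≤ N * eLpNorm f p volume := by
        rw [← eLpNorm_one_eq_lintegral_enorm]
        gcongr
        exact eLpNorm_le_eLpNorm_of_exponent_le hp₁ hf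

lemma norm_cellMeans_le {p : ℝ≥0∞} [Fact (1 ≤ p)] (f : Lp E p (volume : Measure 𝕋)) :
    ‖cellMeans N f‖ ≤ N * ‖f‖ :=
  (pi_norm_le_iff_of_nonneg (by positivity)).mpr fun j => by
    simpa [Lp.norm_def] using ENNReal.toReal_mono (mul_ne_top (natCast_ne_top N)
      (Lp.eLpNorm_ne_top f)) (enorm_cellMeans_le Fact.out (Lp.aestronglyMeasurable f) j)

lemma dist_stepLp_cellMeans {p : ℝ≥0∞} [Fact (1 ≤ p)] (f : Lp E p (volume : Measure 𝕋)) :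
    dist f (stepLp N p (cellMeans N f)) =
      (eLpNorm (fun t => f t - cellAverage N f t) p volume).toReal := by
  rw [Lp.dist_def]
  exact congrArg _ (eLpNorm_congr_ae (Filter.EventuallyEq.rfl.sub (MemLp.coeFn_toLp _)))

theorem totallyBounded_of_isBounded_of_eLpNorm_sub_translate_le [ProperSpace E]
    {p : ℝ≥0∞} [Fact (1 ≤ p)] (hp : p ≠ ∞) {S : Set (Lp E p (volume : Measure 𝕋))}
    (hS : Bornology.IsBounded S)
    (htrans : ∀ ε > 0, ∃ r > 0, ∀ f ∈ S, ∀ δ : 𝕋, ‖δ‖ ≤ r →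
      eLpNorm (fun t => f t - f (t + δ)) p volume ≤ ε) :
    TotallyBounded S := by
  refine totallyBounded_of_forall_exists_isCompact fun ε hε => ?_
  obtain ⟨R, -, hR⟩ := hS.exists_pos_norm_le
  obtain ⟨r, hr, hSr⟩ := htrans (.ofReal (ε / 4)) (by simpa using hε)
  obtain ⟨n, hn⟩ := exists_nat_one_div_lt hr
  have hNr : ((n + 1 : ℕ) : ℝ)⁻¹ ≤ r := by push_cast; rw [inv_eq_one_div]; exact hn.le
  refine ⟨stepLp (n + 1) p '' Metric.closedBall 0 ((n + 1 : ℕ) * R),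
    (isCompact_closedBall _ _).image (lipschitzWith_stepLp p).continuous, fun f hf =>
    ⟨_, mem_image_of_mem _ (mem_closedBall_zero_iff.mpr ((norm_cellMeans_le f).trans
      (by gcongr; exact hR f hf))), ?_⟩⟩
  have hp₁ : (1 : ℝ≥0∞) ≤ p := Fact.out
  have happrox := eLpNorm_sub_cellAverage_le (N := n + 1) hp₁ hp (Lp.stronglyMeasurable f)
    ((Lp.memLp f).integrable hp₁) fun δ hδ =>
      hSr f hf δ ((mem_closedBall_zero_iff.mp hδ).trans hNr)
  rw [dist_stepLp_cellMeans]
  calc (eLpNorm (fun t => f t - cellAverage (n + 1) f t) p volume).toReal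
      ≤ (2 * ENNReal.ofReal (ε / 4)).toReal :=
        ENNReal.toReal_mono (mul_ne_top ofNat_ne_top ofReal_ne_top) happrox
    _ < ε := by rw [toReal_mul, toReal_ofReal (by positivity)]; norm_num; linarith

end UnitAddCircle

theorem frechet_kolmogorov_compact_general (p : ℝ≥0∞) [hp : Fact (1 ≤ p)] (hp' : p ≠ ⊤)
    (μ : ℕ → ℕ) (R : ℝ) :
    IsCompact {f : Lp ℂ p (volume : Measure (AddCircle (1:ℝ))) |
      ‖f‖ ≤ R ∧
      ∀ (n : ℕ) (δ : ℝ), |δ| ≤ (1/2 : ℝ) ^ (μ n) →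
        eLpNorm (fun t => f t - f (t + (δ : AddCircle (1:ℝ)))) p volume ≤ (1/2 : ℝ≥0∞) ^ n} := by
  refine TotallyBounded.isCompact_of_isClosed ?_ ?_
  · refine UnitAddCircle.totallyBounded_of_isBounded_of_eLpNorm_sub_translate_le hp'
      ((Metric.isBounded_closedBall (x := 0) (r := R)).subset fun f hf =>
        mem_closedBall_zero_iff.mpr hf.1) fun ε hε => ?_
    obtain ⟨n, hn⟩ := ENNReal.exists_inv_two_pow_lt hε.ne'
    refine ⟨(1 / 2) ^ μ n, by positivity, fun f hf δ hδ => ?_⟩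
    obtain ⟨x, rfl, hx⟩ := UnitAddCircle.exists_coe_eq_abs_eq_norm δ
    exact (hf.2 n x (hx ▸ hδ)).trans (by rw [one_div]; exact hn.le)
  · simp only [ofPred_and, ofPred_forall]
    exact (isClosed_le continuous_norm continuous_const).inter <| isClosed_iInter fun n =>
      isClosed_iInter fun δ => isClosed_iInter fun _ =>
        isClosed_setOf_eLpNorm_sub_translate_le volume p _ _

theorem frechet_kolmogorov_compact (p : ℝ≥0∞) [hp : Fact (1 ≤ p)] (hp' : p ≠ ⊤)
    (μ : ℕ → ℕ) (hμ : Monotone μ) (R : ℝ) (hR : 0 ≤ R) :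
    IsCompact {f : Lp ℂ p (volume : Measure (AddCircle (1:ℝ))) |
      ‖f‖ ≤ R ∧
      ∀ (n : ℕ) (δ : ℝ), |δ| ≤ (1/2 : ℝ) ^ (μ n) →
        eLpNorm (fun t => f t - f (t + (δ : AddCircle (1:ℝ)))) p volume ≤ (1/2 : ℝ≥0∞) ^ n} :=
  frechet_kolmogorov_compact_general p (hp := hp) hp' μ R
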